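/- Let K be a right quasi-field. If for every nonzero v ∈ K the affine plane K² admits a translation taking (0,0) to (v,0), then the left distributivity law a(u+v) = au + av holds in K. -/

import Mathlib

/-- Two lines are parallel if they are equal or disjoint. -/
def Parallel {P : Type*} (l m : Set P) : Prop := l = m ∨ l ∩ m = ∅

/-- A translation: an automorphism taking each line to a parallel line and
preserving every line of some parallel class. -/
def IsTranslation {P : Type*} (L : Set (Set P)) (f : P → P) : Prop :=
  Function.Bijective f ∧
  (∀ l ∈ L, f '' l ∈ L) ∧
  (∀ l ∈ L, Parallel (f '' l) l) ∧
  (∃ l₀ ∈ L, ∀ l ∈ L, Parallel l l₀ → f '' l = l)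

/-- A right quasi-field: abelian additive group, VW2, VW3, right distributivity,
and unique solvability of xa = xa' + b for a ≠ a'. -/
def IsRightQuasifield {K : Type*} [AddCommGroup K] (mul : K → K → K) (one : K) : Prop :=
  one ≠ 0 ∧
  (∀ a b : K, a ≠ 0 → b ≠ 0 →
    (∃! x, mul a x = b) ∧ (∃! x, mul x a = b) ∧
    (∀ x, mul a x = b → x ≠ 0) ∧ (∀ x, mul x a = b → x ≠ 0) ∧ mul a b ≠ 0) ∧
  (∀ x : K, mul one x = x ∧ mul x one = x ∧ mul 0 x = 0 ∧ mul x 0 = 0) ∧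
  (∀ a x y : K, mul (x + y) a = mul x a + mul y a) ∧
  (∀ a a' b : K, a ≠ a' → ∃! x, mul x a = mul x a' + b)

/-- The lines of the affine plane K²: vertical lines x = c and lines y = ax + b. -/
def qLines {K : Type*} [AddCommGroup K] (mul : K → K → K) : Set (Set (K × K)) :=
  {S | (∃ c, S = {p : K × K | p.1 = c}) ∨ (∃ a b, S = {p : K × K | p.2 = mul a p.1 + b})}

/-!
A translation `f` moving `(0,0)` to `(v,0)` with `v ≠ 0` cannot fix the vertical lines, and the
lines it fixes must be horizontal (a fixed line `y = a₀x + b` through `(0,0)` passes through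
`(v,0)`, forcing `a₀ v = 0`). So `f` preserves the second coordinate and, mapping vertical lines
to vertical lines, has the form `(x, y) ↦ (σ x, y)`. It maps the line `y = ax` to a parallel line,
i.e. to some `y = ax + b'`; evaluating at `x = 0` gives `a (σ x) = a x + a (σ 0)`. For `a = 1`
this says `σ x = x + v`, and then for general `a` it is left distributivity.
-/

theorem Parallel.symm {P : Type*} {l m : Set P} (h : Parallel l m) : Parallel m l :=
  h.imp Eq.symm fun h => Set.inter_comm l m ▸ h

namespace IsRightQuasifield

variable {K : Type*} [AddCommGroup K] {mul : K → K → K} {one : K}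

theorem nontrivial (hQ : IsRightQuasifield mul one) : Nontrivial K :=
  ⟨⟨one, 0, hQ.1⟩⟩

theorem one_mul (hQ : IsRightQuasifield mul one) (x : K) : mul one x = x :=
  (hQ.2.2.1 x).1

theorem mul_one (hQ : IsRightQuasifield mul one) (x : K) : mul x one = x :=
  (hQ.2.2.1 x).2.1

theorem zero_mul (hQ : IsRightQuasifield mul one) (x : K) : mul 0 x = 0 :=
  (hQ.2.2.1 x).2.2.1

theorem mul_zero (hQ : IsRightQuasifield mul one) (x : K) : mul x 0 = 0 :=
  (hQ.2.2.1 x).2.2.2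

theorem mul_ne_zero (hQ : IsRightQuasifield mul one) {a b : K} (ha : a ≠ 0) (hb : b ≠ 0) :
    mul a b ≠ 0 :=
  (hQ.2.1 a b ha hb).2.2.2.2

theorem sub_mul (hQ : IsRightQuasifield mul one) (a x y : K) :
    mul (x - y) a = mul x a - mul y a :=
  eq_sub_of_add_eq (by rw [← hQ.2.2.2.1, sub_add_cancel])

theorem exists_mul_eq (hQ : IsRightQuasifield mul one) {a : K} (ha : a ≠ 0) (b : K) :
    ∃ x, mul a x = b := by
  rcases eq_or_ne b 0 with rfl | hb
  · exact ⟨0, hQ.mul_zero a⟩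
  · exact (hQ.2.1 a b ha hb).1.exists

end IsRightQuasifield

section Lines

variable {K : Type*}

def vertLine (c : K) : Set (K × K) := {p | p.1 = c}

theorem parallel_vertLine (c d : K) : Parallel (vertLine c) (vertLine d) := by
  rcases eq_or_ne c d with rfl | hcd
  · exact Or.inl rfl
  · exact Or.inr (Set.eq_empty_of_forall_notMem fun p ⟨hc, hd⟩ => hcd (hc.symm.trans hd))

variable [AddCommGroup K]

def slopeLine (mul : K → K → K) (a b : K) : Set (K × K) := {p | p.2 = mul a p.1 + b}

theorem vertLine_mem_qLines (mul : K → K → K) (c : K) : vertLine c ∈ qLines mul :=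
  Or.inl ⟨c, rfl⟩

theorem slopeLine_mem_qLines (mul : K → K → K) (a b : K) : slopeLine mul a b ∈ qLines mul :=
  Or.inr ⟨a, b, rfl⟩

theorem not_parallel_vertLine_slopeLine [Nontrivial K] (mul : K → K → K) (c a b : K) :
    ¬ Parallel (vertLine c) (slopeLine mul a b) := by
  obtain ⟨e, he⟩ := exists_ne (0 : K)
  rintro (heq | hdisj)
  · have hmem : (c, mul a c + b + e) ∈ slopeLine mul a b := heq ▸ rfl
    exact he (add_eq_left.mp hmem)
  · exact hdisj.subset (show (c, mul a c + b) ∈ vertLine c ∩ slopeLine mul a b from ⟨rfl, rfl⟩)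

theorem parallel_slopeLine_iff {mul : K → K → K} {one : K} (hQ : IsRightQuasifield mul one)
    {a a' b b' : K} : Parallel (slopeLine mul a b) (slopeLine mul a' b') ↔ a = a' := by
  constructor
  · rintro (heq | hdisj)
    · have h0 : (0, b) ∈ slopeLine mul a' b' := heq ▸ by simp [slopeLine, hQ.mul_zero]
      have h1 : (one, a + b) ∈ slopeLine mul a' b' := heq ▸ by simp [slopeLine, hQ.mul_one]
      simp only [slopeLine, Set.mem_ofPred_eq, hQ.mul_zero, hQ.mul_one, zero_add] at h0 h1
      rwa [h0, add_left_inj] at h1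
    · by_contra hne
      obtain ⟨x, hx⟩ := hQ.exists_mul_eq (sub_ne_zero.mpr hne) (b' - b)
      rw [hQ.sub_mul] at hx
      refine hdisj.subset (show (x, mul a x + b) ∈ slopeLine mul a b ∩ slopeLine mul a' b' from
        ⟨rfl, ?_⟩)
      change mul a x + b = mul a' x + b'
      rw [eq_add_of_sub_eq hx]
      abel
  · rintro rfl
    rcases eq_or_ne b b' with rfl | hbb'
    · exact Or.inl rfl
    · exact Or.inr (Set.eq_empty_of_forall_notMem fun p ⟨hb, hb'⟩ =>
        hbb' (add_left_cancel (hb.symm.trans hb')))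

end Lines

namespace IsTranslation

variable {K : Type*} [AddCommGroup K] {mul : K → K → K} {f : K × K → K × K}

theorem image_vertLine [Nontrivial K] (hf : IsTranslation (qLines mul) f) (c : K) :
    ∃ c', f '' vertLine c = vertLine c' := by
  have hpar := hf.2.2.1 _ (vertLine_mem_qLines mul c)
  rcases hf.2.1 _ (vertLine_mem_qLines mul c) with ⟨c', hc'⟩ | ⟨a, b, hab⟩
  · exact ⟨c', hc'⟩
  · exact absurd (hab ▸ hpar).symm (not_parallel_vertLine_slopeLine mul c a b)

theorem image_slopeLine {one : K} (hQ : IsRightQuasifield mul one)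
    (hf : IsTranslation (qLines mul) f) (a b : K) :
    ∃ b', f '' slopeLine mul a b = slopeLine mul a b' := by
  have := hQ.nontrivial
  have hpar := hf.2.2.1 _ (slopeLine_mem_qLines mul a b)
  rcases hf.2.1 _ (slopeLine_mem_qLines mul a b) with ⟨c, hc⟩ | ⟨a', b', hab⟩
  · rw [hc] at hpar
    exact absurd hpar (not_parallel_vertLine_slopeLine mul c a b)
  · obtain rfl := (parallel_slopeLine_iff hQ).mp (hab ▸ hpar).symm
    exact ⟨b', hab⟩

theorem fst_apply_eq [Nontrivial K] (hf : IsTranslation (qLines mul) f) (x y y' : K) :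
    (f (x, y)).1 = (f (x, y')).1 := by
  obtain ⟨c, hc⟩ := hf.image_vertLine x
  have hy : f (x, y) ∈ vertLine c := hc ▸ Set.mem_image_of_mem f rfl
  have hy' : f (x, y') ∈ vertLine c := hc ▸ Set.mem_image_of_mem f rfl
  exact hy.trans hy'.symm

theorem snd_apply_eq {one : K} (hQ : IsRightQuasifield mul one)
    (hf : IsTranslation (qLines mul) f) {v : K} (hv : v ≠ 0) (h0 : f (0, 0) = (v, 0))
    (p : K × K) : (f p).2 = p.2 := by
  obtain ⟨-, -, -, l₀, hl₀, hfix⟩ := hf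
  have mem_of_parallel : ∀ l ∈ qLines mul, Parallel l l₀ → ∀ q ∈ l, f q ∈ l :=
    fun l hl hpar q hq => hfix l hl hpar ▸ Set.mem_image_of_mem f hq
  rcases hl₀ with ⟨c, rfl⟩ | ⟨a₀, b₀, rfl⟩
  · have h := mem_of_parallel _ (vertLine_mem_qLines mul 0) (parallel_vertLine 0 c) (0, 0) rfl
    rw [h0] at h
    exact absurd h hv
  · have ha₀ : a₀ = 0 := by
      by_contra ha₀
      have h := mem_of_parallel _ (slopeLine_mem_qLines mul a₀ 0)
        ((parallel_slopeLine_iff hQ).mpr rfl) (0, 0) (by simp [slopeLine, hQ.mul_zero])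
      rw [h0] at h
      exact hQ.mul_ne_zero ha₀ hv (by simpa [slopeLine] using h.symm)
    subst ha₀
    have h := mem_of_parallel _ (slopeLine_mem_qLines mul 0 p.2)
      ((parallel_slopeLine_iff hQ).mpr rfl) p (by simp [slopeLine, hQ.zero_mul])
    simpa [slopeLine, hQ.zero_mul] using h

theorem eq_prodMap {one : K} (hQ : IsRightQuasifield mul one)
    (hf : IsTranslation (qLines mul) f) {v : K} (hv : v ≠ 0) (h0 : f (0, 0) = (v, 0)) :
    f = Prod.map (fun x => (f (x, 0)).1) id := by
  have := hQ.nontrivial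
  funext p
  exact Prod.ext (hf.fst_apply_eq p.1 p.2 0) (hf.snd_apply_eq hQ hv h0 p)

theorem mul_apply_eq_add_of_prodMap {one : K} (hQ : IsRightQuasifield mul one) {σ : K → K}
    (hf : IsTranslation (qLines mul) (Prod.map σ id)) (a x : K) :
    mul a (σ x) = mul a x + mul a (σ 0) := by
  obtain ⟨b', hb'⟩ := hf.image_slopeLine hQ a 0
  have hmem : ∀ y, (σ y, mul a y) ∈ slopeLine mul a b' := fun y =>
    hb' ▸ ⟨(y, mul a y), by simp [slopeLine], rfl⟩
  have hx : mul a x = mul a (σ x) + b' := hmem x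
  have h0 : mul a 0 = mul a (σ 0) + b' := hmem 0
  rw [hQ.mul_zero] at h0
  rw [hx, eq_neg_of_add_eq_zero_right h0.symm]
  abel

end IsTranslation

/-- If a right quasi-field's plane admits, for each v ≠ 0, a translation taking
(0,0) to (v,0), then the left distributivity law holds in K. -/
theorem rightQuasifield_translations_imply_leftDistrib {K : Type*} [AddCommGroup K]
    (mul : K → K → K) (one : K) (hQ : IsRightQuasifield mul one)
    (htr : ∀ v : K, v ≠ 0 → ∃ f : K × K → K × K,
      IsTranslation (qLines mul) f ∧ f (0, 0) = (v, 0)) :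
    ∀ a u v : K, mul a (u + v) = mul a u + mul a v := by
  intro a u v
  rcases eq_or_ne v 0 with rfl | hv
  · rw [add_zero, hQ.mul_zero, add_zero]
  obtain ⟨f, hf, h0⟩ := htr v hv
  set σ : K → K := fun x => (f (x, 0)).1
  have hσ0 : σ 0 = v := congrArg Prod.fst h0
  have hfσ : IsTranslation (qLines mul) (Prod.map σ id) := hf.eq_prodMap hQ hv h0 ▸ hf
  have hσ : ∀ x, σ x = x + v := fun x => by
    simpa only [hQ.one_mul, hσ0] using hfσ.mul_apply_eq_add_of_prodMap hQ one x
  calc mul a (u + v) = mul a (σ u) := by rw [hσ]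
    _ = mul a u + mul a (σ 0) := hfσ.mul_apply_eq_add_of_prodMap hQ a u
    _ = mul a u + mul a v := by rw [hσ0]
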